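/- Let G be a finite graph with symmetric edge weights, Ω a finite subset of vertices with Ω̃ connected and at least two boundary vertices, and let f : Ω̄ → ℝ be a harmonic extension of an eigenfunction of the Dirichlet-to-Neumann operator associated with the first nontrivial eigenvalue λ_1(Ω) (i.e., Δf = 0 on Ω and ∂f/∂n = λ_1(Ω) f on δΩ). Let Ω̄⁺ = {x ∈ Ω̄ : f(x) > 0}, δ⁺Ω = Ω̄⁺ ∩ δΩ, and let g = max(f, 0) be the positive part of f on Ω̄. If g is not identically zero on δ⁺Ω, then λ_1(Ω) ≥ ( Σ_{e={x,y} ∈ E(Ω̄⁺,Ω̄)} μ_{xy} (g(y) − g(x))² ) / ( Σ_{x ∈ δ⁺Ω} g(x)² m_x ), where E(Ω̄⁺,Ω̄) denotes the set of edges of E(Ω,Ω̄) with at least one endpoint in Ω̄⁺. -/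

import Mathlib

open scoped Classical
open Finset

variable {V : Type*} [Fintype V]

/-- The vertex boundary δΩ of a finite set Ω of vertices. -/
noncomputable def bdry (μ : V → V → ℝ) (Ω : Finset V) : Finset V :=
  Finset.univ.filter fun x => x ∉ Ω ∧ ∃ y ∈ Ω, 0 < μ x y

/-- Ω̄ = Ω ∪ δΩ. -/
noncomputable def clos (μ : V → V → ℝ) (Ω : Finset V) : Finset V :=
  Ω ∪ bdry μ Ω

/-- The vertex measure m on Ω̄. -/
noncomputable def vm (μ : V → V → ℝ) (Ω : Finset V) (x : V) : ℝ :=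
  if x ∈ Ω then ∑ y, μ x y else ∑ y ∈ Ω, μ x y

/-- m(B) = Σ_{x ∈ B} m_x. -/
noncomputable def msum (μ : V → V → ℝ) (Ω : Finset V) (B : Finset V) : ℝ :=
  ∑ x ∈ B, vm μ Ω x

/-- Sum over the edges e = {x,y} of E(Ω,Ω̄) of μ_{xy} · F x y (for symmetric F). -/
noncomputable def edgeSum (μ : V → V → ℝ) (Ω : Finset V) (F : V → V → ℝ) : ℝ :=
  (∑ x ∈ Ω, ∑ y ∈ Ω, μ x y * F x y) / 2 +
    ∑ x ∈ Ω, ∑ y ∈ bdry μ Ω, μ x y * F x y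

/-- Dirichlet energy D_Ω(f). -/
noncomputable def dirichlet (μ : V → V → ℝ) (Ω : Finset V) (f : V → ℝ) : ℝ :=
  edgeSum μ Ω fun x y => (f x - f y) ^ 2

/-- Dirichlet form D_Ω(f,g). -/
noncomputable def dform (μ : V → V → ℝ) (Ω : Finset V) (f g : V → ℝ) : ℝ :=
  edgeSum μ Ω fun x y => (f x - f y) * (g x - g y)

/-- μ(∂_Ω A): total weight of the edges of E(Ω,Ω̄) with exactly one endpoint in A. -/
noncomputable def cut (μ : V → V → ℝ) (Ω : Finset V) (A : Finset V) : ℝ :=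
  edgeSum μ Ω fun x y => if (x ∈ A) ↔ (y ∈ A) then 0 else 1

/-- The graph Laplacian Δf(x) (used for x ∈ Ω). -/
noncomputable def lap (μ : V → V → ℝ) (Ω : Finset V) (f : V → ℝ) (x : V) : ℝ :=
  (∑ y, μ x y * (f y - f x)) / vm μ Ω x

/-- The outward normal derivative ∂f/∂n(z) (used for z ∈ δΩ). -/
noncomputable def nderiv (μ : V → V → ℝ) (Ω : Finset V) (f : V → ℝ) (z : V) : ℝ :=
  (∑ x ∈ Ω, μ z x * (f z - f x)) / vm μ Ω z

/-- f is harmonic on Ω. -/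
def IsHarmonic (μ : V → V → ℝ) (Ω : Finset V) (u : V → ℝ) : Prop :=
  ∀ x ∈ Ω, lap μ Ω u x = 0

/-- Adjacency in the graph Ω̃ = (Ω̄, E(Ω,Ω̄)). -/
def tilAdj (μ : V → V → ℝ) (Ω : Finset V) (x y : V) : Prop :=
  0 < μ x y ∧ (x ∈ Ω ∨ y ∈ Ω)

/-- The graph Ω̃ is connected. -/
def TilConnected (μ : V → V → ℝ) (Ω : Finset V) : Prop :=
  ∀ x ∈ clos μ Ω, ∀ y ∈ clos μ Ω, Relation.ReflTransGen (tilAdj μ Ω) x y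

/-- λ₁(Ω): the first nontrivial eigenvalue of the Dirichlet-to-Neumann operator,
characterized by its Rayleigh quotient. -/
noncomputable def lambda1 (μ : V → V → ℝ) (Ω : Finset V) : ℝ :=
  sInf { r : ℝ | ∃ u : V → ℝ, IsHarmonic μ Ω u ∧
    (∑ x ∈ bdry μ Ω, u x ^ 2 * vm μ Ω x) = 1 ∧
    (∑ x ∈ bdry μ Ω, u x * vm μ Ω x) = 0 ∧
    r = dirichlet μ Ω u }

/-- The Escobar-type Cheeger constant h_E(Ω̃). -/
noncomputable def hE (μ : V → V → ℝ) (Ω : Finset V) : ℝ :=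
  sInf { r : ℝ | ∃ A : Finset V, A ⊆ clos μ Ω ∧
    0 < msum μ Ω (A ∩ bdry μ Ω) ∧
    msum μ Ω (A ∩ bdry μ Ω) ≤ msum μ Ω (bdry μ Ω) / 2 ∧
    r = cut μ Ω A / msum μ Ω (A ∩ bdry μ Ω) }

/-- The Jammes-type Cheeger constant h_J(Ω̃). -/
noncomputable def hJ (μ : V → V → ℝ) (Ω : Finset V) : ℝ :=
  sInf { r : ℝ | ∃ A : Finset V, A ⊆ clos μ Ω ∧
    (A ∩ bdry μ Ω).Nonempty ∧
    msum μ Ω A ≤ msum μ Ω (clos μ Ω) / 2 ∧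
    r = cut μ Ω A / msum μ Ω (A ∩ bdry μ Ω) }

/-- The classical Cheeger constant h(Ω̃). -/
noncomputable def cheeger (μ : V → V → ℝ) (Ω : Finset V) : ℝ :=
  sInf { r : ℝ | ∃ A : Finset V, A ⊆ clos μ Ω ∧ A.Nonempty ∧
    msum μ Ω A ≤ msum μ Ω (clos μ Ω) / 2 ∧
    r = cut μ Ω A / msum μ Ω A }

/-- Sum over the edges e = {x,y} of E(Ω,Ω̄) having at least one endpoint in P
of μ_{xy} · F x y (for symmetric F); used for the edge set E(Ω̄⁺,Ω̄). -/
noncomputable def edgeSumOn (μ : V → V → ℝ) (Ω : Finset V) (P : Finset V)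
    (F : V → V → ℝ) : ℝ :=
  (∑ x ∈ Ω, ∑ y ∈ Ω, if x ∈ P ∨ y ∈ P then μ x y * F x y else 0) / 2 +
    ∑ x ∈ Ω, ∑ y ∈ bdry μ Ω, if x ∈ P ∨ y ∈ P then μ x y * F x y else 0

/-!
Let `g = f⁺`. Because `f` is harmonic in `Ω`, the discrete Green formula turns the Dirichlet
form `D(f, g)` into the boundary sum `∑_{δΩ} g · ∂f/∂n · m = λ₁ ∑_{δΩ} g f m = λ₁ ∑_{δ⁺Ω} g² m`.
On every edge, `(g y - g x)² ≤ (f x - f y)(g x - g y)` since the positive part is monotone and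
`1`-Lipschitz, so the energy of `g` on `E(Ω̄⁺, Ω̄)` is at most `D(f, g)`. As an infimum of
energies `λ₁ ≥ 0`, so the bound also holds when the denominator vanishes and the quotient is `0`.
-/

theorem sq_max_zero_sub_le_mul (a b : ℝ) :
    (max b 0 - max a 0) ^ 2 ≤ (a - b) * (max a 0 - max b 0) := by
  rcases le_total a 0 with ha | ha <;> rcases le_total b 0 with hb | hb <;>
    simp only [max_eq_left, max_eq_right, ha, hb] <;> nlinarith

theorem sum_sum_mul_sub_eq_neg_half {α : Type*} {μ : α → α → ℝ} (hsym : ∀ x y, μ x y = μ y x)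
    (s : Finset α) (f g : α → ℝ) :
    ∑ x ∈ s, ∑ y ∈ s, μ x y * (g x * (f y - f x)) =
      -(∑ x ∈ s, ∑ y ∈ s, μ x y * ((f x - f y) * (g x - g y))) / 2 := by
  have hswap : ∑ x ∈ s, ∑ y ∈ s, μ x y * (g x * (f y - f x)) =
      ∑ x ∈ s, ∑ y ∈ s, μ x y * (g y * (f x - f y)) := by
    rw [sum_comm]
    exact sum_congr rfl fun x _ => sum_congr rfl fun y _ => by rw [hsym]
  have hsum : ∑ x ∈ s, ∑ y ∈ s, μ x y * (g x * (f y - f x)) +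
      ∑ x ∈ s, ∑ y ∈ s, μ x y * (g y * (f x - f y)) =
      -∑ x ∈ s, ∑ y ∈ s, μ x y * ((f x - f y) * (g x - g y)) := by
    simp only [← sum_add_distrib, ← sum_neg_distrib]
    exact sum_congr rfl fun x _ => sum_congr rfl fun y _ => by ring
  linarith

section Graph

variable {μ : V → V → ℝ} {Ω : Finset V}

theorem disjoint_bdry : Disjoint Ω (bdry μ Ω) :=
  disjoint_left.2 fun _ hx hxB => (mem_filter.1 hxB).2.1 hx

theorem vm_pos_of_mem_bdry (hnn : ∀ x y, 0 ≤ μ x y) {z : V} (hz : z ∈ bdry μ Ω) :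
    0 < vm μ Ω z := by
  obtain ⟨hzΩ, y, hyΩ, hy⟩ := (mem_filter.1 hz).2
  rw [vm, if_neg hzΩ]
  exact sum_pos' (fun i _ => hnn z i) ⟨y, hyΩ, hy⟩

theorem sum_univ_eq_sum_add_sum_bdry (hsym : ∀ x y, μ x y = μ y x)
    (hnn : ∀ x y, 0 ≤ μ x y) {x : V} (hx : x ∈ Ω) (t : V → ℝ) :
    ∑ y, μ x y * t y = ∑ y ∈ Ω, μ x y * t y + ∑ y ∈ bdry μ Ω, μ x y * t y := by
  rw [← sum_union disjoint_bdry]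
  refine (sum_subset (subset_univ _) fun y _ hy => ?_).symm
  obtain ⟨hyΩ, hyB⟩ := not_or.1 (mem_union.not.1 hy)
  have hμ : μ x y = 0 := by
    by_contra hne
    refine hyB (mem_filter.2 ⟨mem_univ y, hyΩ, x, hx, ?_⟩)
    rw [hsym]
    exact (hnn x y).lt_of_ne' hne
  rw [hμ, zero_mul]

theorem IsHarmonic.sum_mul_sub_eq_zero (hnn : ∀ x y, 0 ≤ μ x y) {f : V → ℝ}
    (hf : IsHarmonic μ Ω f) {x : V} (hx : x ∈ Ω) : ∑ y, μ x y * (f y - f x) = 0 := by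
  rcases div_eq_zero_iff.1 (hf x hx) with h | h
  · exact h
  · rw [vm, if_pos hx] at h
    have hμ := (sum_eq_zero_iff_of_nonneg fun y _ => hnn x y).1 h
    exact sum_eq_zero fun y hy => by rw [hμ y hy, zero_mul]

theorem dform_eq_sum_bdry (hsym : ∀ x y, μ x y = μ y x) (hnn : ∀ x y, 0 ≤ μ x y)
    {f : V → ℝ} (hf : IsHarmonic μ Ω f) (g : V → ℝ) :
    dform μ Ω f g = ∑ z ∈ bdry μ Ω, g z * nderiv μ Ω f z * vm μ Ω z := by
  set B := bdry μ Ω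
  have hgreen : ∑ x ∈ Ω, ∑ y ∈ Ω, μ x y * (g x * (f y - f x)) +
      ∑ x ∈ Ω, ∑ y ∈ B, μ x y * (g x * (f y - f x)) = 0 := by
    rw [← sum_add_distrib]
    refine sum_eq_zero fun x hx => ?_
    rw [← sum_univ_eq_sum_add_sum_bdry hsym hnn hx]
    simp only [mul_left_comm (μ x _) (g x), ← mul_sum, hf.sum_mul_sub_eq_zero hnn hx, mul_zero]
  have hbdry : ∑ x ∈ Ω, ∑ y ∈ B, μ x y * ((f x - f y) * (g x - g y)) =
      -∑ x ∈ Ω, ∑ y ∈ B, μ x y * (g x * (f y - f x)) +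
        ∑ z ∈ B, g z * nderiv μ Ω f z * vm μ Ω z := by
    have hnormal : ∀ z ∈ B, g z * nderiv μ Ω f z * vm μ Ω z =
        ∑ x ∈ Ω, μ x z * ((f z - f x) * g z) := by
      intro z hz
      rw [nderiv, mul_assoc, div_mul_cancel₀ _ (vm_pos_of_mem_bdry hnn hz).ne', mul_sum]
      exact sum_congr rfl fun x _ => by rw [hsym]; ring
    rw [sum_congr rfl hnormal, sum_comm (s := B), ← sum_neg_distrib, ← sum_add_distrib]
    refine sum_congr rfl fun x _ => ?_
    rw [← sum_neg_distrib, ← sum_add_distrib]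
    exact sum_congr rfl fun y _ => by ring
  rw [dform, edgeSum, hbdry]
  linarith [sum_sum_mul_sub_eq_neg_half hsym Ω f g]

theorem edgeSum_mono (hnn : ∀ x y, 0 ≤ μ x y) {F G : V → V → ℝ}
    (hFG : ∀ x y, F x y ≤ G x y) : edgeSum μ Ω F ≤ edgeSum μ Ω G := by
  unfold edgeSum
  gcongr <;> first | exact hnn _ _ | exact hFG _ _

theorem edgeSumOn_le_edgeSum (hnn : ∀ x y, 0 ≤ μ x y) (P : Finset V) {F : V → V → ℝ}
    (hF : ∀ x y, 0 ≤ F x y) : edgeSumOn μ Ω P F ≤ edgeSum μ Ω F := by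
  have hterm : ∀ x y, (if x ∈ P ∨ y ∈ P then μ x y * F x y else 0) ≤ μ x y * F x y :=
    fun x y => by split_ifs <;> first | exact le_rfl | exact mul_nonneg (hnn x y) (hF x y)
  unfold edgeSumOn edgeSum
  gcongr with x _ y _ x _ y _ <;> exact hterm x y

theorem edgeSum_nonneg (hnn : ∀ x y, 0 ≤ μ x y) {F : V → V → ℝ} (hF : ∀ x y, 0 ≤ F x y) :
    0 ≤ edgeSum μ Ω F := by
  have hterm : ∀ s t : Finset V, 0 ≤ ∑ x ∈ s, ∑ y ∈ t, μ x y * F x y := fun _ _ =>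
    sum_nonneg fun x _ => sum_nonneg fun y _ => mul_nonneg (hnn x y) (hF x y)
  exact add_nonneg (div_nonneg (hterm _ _) zero_le_two) (hterm _ _)

theorem lambda1_nonneg (hnn : ∀ x y, 0 ≤ μ x y) : 0 ≤ lambda1 μ Ω := by
  refine Real.sInf_nonneg ?_
  rintro _ ⟨u, -, -, -, rfl⟩
  exact edgeSum_nonneg hnn fun _ _ => sq_nonneg _

end Graph

theorem stmt_18_general (μ : V → V → ℝ) (Ω : Finset V)
    (hsym : ∀ x y, μ x y = μ y x) (hnn : ∀ x y, 0 ≤ μ x y)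
    (f : V → ℝ) (hharm : IsHarmonic μ Ω f)
    (heig : ∀ z ∈ bdry μ Ω, nderiv μ Ω f z = lambda1 μ Ω * f z)
    (g : V → ℝ) (hg : ∀ x, g x = max (f x) 0) :
    lambda1 μ Ω ≥
      edgeSumOn μ Ω ((clos μ Ω).filter (fun x => 0 < f x))
          (fun x y => (g y - g x) ^ 2) /
        ∑ x ∈ (clos μ Ω).filter (fun x => 0 < f x) ∩ bdry μ Ω,
          g x ^ 2 * vm μ Ω x := by
  set P := (clos μ Ω).filter (fun x => 0 < f x)
  have hg_mul_f : ∀ x, g x * f x = g x ^ 2 := fun x => by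
    rcases le_total (f x) 0 with h | h <;> simp [hg, h, sq]
  have hgreen : dform μ Ω f g = lambda1 μ Ω * ∑ x ∈ P ∩ bdry μ Ω, g x ^ 2 * vm μ Ω x := by
    rw [dform_eq_sum_bdry hsym hnn hharm, mul_sum]
    refine (sum_subset inter_subset_right fun z hzB hzP => ?_).symm.trans
      (sum_congr rfl fun z hz => ?_)
    · have hfz : f z ≤ 0 :=
        not_lt.1 fun h => hzP (mem_inter.2 ⟨mem_filter.2 ⟨mem_union_right _ hzB, h⟩, hzB⟩)
      simp [hg, hfz]
    · rw [heig z (mem_inter.1 hz).2, ← hg_mul_f]; ring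
  have henergy : edgeSumOn μ Ω P (fun x y => (g y - g x) ^ 2) ≤ dform μ Ω f g :=
    (edgeSumOn_le_edgeSum hnn P fun _ _ => sq_nonneg _).trans <| edgeSum_mono hnn fun x y => by
      simpa only [hg] using sq_max_zero_sub_le_mul (f x) (f y)
  exact div_le_of_le_mul₀
    (sum_nonneg fun x hx => mul_nonneg (sq_nonneg _) (vm_pos_of_mem_bdry hnn (mem_inter.1 hx).2).le)
    (lambda1_nonneg hnn) (henergy.trans hgreen.le)

/-- Lemma 5.2: if f is (the harmonic extension of) an eigenfunction for the first
nontrivial DtN eigenvalue λ₁(Ω), g = max(f,0), Ω̄⁺ = {f > 0} and δ⁺Ω = Ω̄⁺ ∩ δΩ,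
then λ₁(Ω) ≥ (Σ_{e={x,y}∈E(Ω̄⁺,Ω̄)} μ_{xy}(g(y) − g(x))²) / (Σ_{x∈δ⁺Ω} g(x)² m_x). -/
theorem stmt_18 (μ : V → V → ℝ) (Ω : Finset V)
    (hsym : ∀ x y, μ x y = μ y x) (hnn : ∀ x y, 0 ≤ μ x y)
    (hconn : TilConnected μ Ω) (hcard : 2 ≤ (bdry μ Ω).card)
    (f : V → ℝ) (hharm : IsHarmonic μ Ω f)
    (heig : ∀ z ∈ bdry μ Ω, nderiv μ Ω f z = lambda1 μ Ω * f z)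
    (g : V → ℝ) (hg : ∀ x, g x = max (f x) 0)
    (hne : ∃ x ∈ (clos μ Ω).filter (fun x => 0 < f x) ∩ bdry μ Ω, g x ≠ 0) :
    lambda1 μ Ω ≥
      edgeSumOn μ Ω ((clos μ Ω).filter (fun x => 0 < f x))
          (fun x y => (g y - g x) ^ 2) /
        ∑ x ∈ (clos μ Ω).filter (fun x => 0 < f x) ∩ bdry μ Ω,
          g x ^ 2 * vm μ Ω x :=
  stmt_18_general μ Ω hsym hnn f hharm heig g hg
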